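/- Let G, G' be groups with identities e, e', ψ ∈ Aut(G), ψ' ∈ Aut(G'), and let P, P' be the orbits of e, e' under the inner automorphism groups of Q(G,ψ), Q(G',ψ'). If f : Q(G,ψ) → Q(G',ψ') is a quandle isomorphism with f(e) = e', then f(xP) = f(x)P' for every x ∈ G, i.e., f maps each left coset of P onto a left coset of P'. -/
import Mathlib


/-- The generalized Alexander quandle operation on a group `G` with automorphism `ψ`. -/
def gaOp {G : Type*} [Group G] (ψ : G ≃* G) (x y : G) : G := y * ψ (y⁻¹ * x)

/-- The point symmetry `s_y : x ↦ x * y = y·ψ(y⁻¹x)` as a permutation of `G`. -/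
def ptSym {G : Type*} [Group G] (ψ : G ≃* G) (y : G) : Equiv.Perm G :=
  (Equiv.mulLeft y⁻¹).trans (ψ.toEquiv.trans (Equiv.mulLeft y))

/-- The inner automorphism group of `Q(G,ψ)`: the group of permutations of `G`
generated by the point symmetries. -/
def innGroup {G : Type*} [Group G] (ψ : G ≃* G) : Subgroup (Equiv.Perm G) :=
  Subgroup.closure (Set.range (ptSym ψ))

/-- `P(Q(G,ψ))`: the orbit of the identity element under `Inn(Q(G,ψ))`. -/
def innOrbit {G : Type*} [Group G] (ψ : G ≃* G) : Set G :=
  {g | ∃ f ∈ innGroup ψ, f 1 = g}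

section Aux

variable {G G' : Type*} [Group G] [Group G']

lemma ptSym_apply (ψ : G ≃* G) (y x : G) : ptSym ψ y x = y * ψ (y⁻¹ * x) := rfl

lemma conj_ptSym (ψ : G ≃* G) (a y : G) :
    (Equiv.mulLeft a : Equiv.Perm G) * ptSym ψ y * (Equiv.mulLeft a)⁻¹ = ptSym ψ (a * y) := by
  ext x
  simp [ptSym, Equiv.Perm.mul_apply, mul_assoc, mul_inv_rev]

lemma conj_mem (ψ : G ≃* G) (a : G) {g : Equiv.Perm G} (hg : g ∈ innGroup ψ) :
    (Equiv.mulLeft a : Equiv.Perm G) * g * (Equiv.mulLeft a)⁻¹ ∈ innGroup ψ := by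
  have h1 : ((innGroup ψ).map (MulAut.conj (Equiv.mulLeft a : Equiv.Perm G)).toMonoidHom)
      ≤ innGroup ψ := by
    rw [innGroup, MonoidHom.map_closure]
    apply Subgroup.closure_mono
    rintro _ ⟨_, ⟨y, rfl⟩, rfl⟩
    exact ⟨a * y, (conj_ptSym ψ a y).symm⟩
  exact h1 ⟨g, hg, rfl⟩

lemma coset_char (ψ : G ≃* G) (x z : G) :
    (∃ p ∈ innOrbit ψ, z = x * p) ↔ ∃ g ∈ innGroup ψ, g x = z := by
  constructor
  · rintro ⟨p, ⟨g, hg, rfl⟩, rfl⟩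
    refine ⟨_, conj_mem ψ x hg, ?_⟩
    simp [Equiv.Perm.mul_apply]
  · rintro ⟨g, hg, rfl⟩
    refine ⟨x⁻¹ * g x, ⟨_, conj_mem ψ x⁻¹ hg, ?_⟩, by simp⟩
    simp [Equiv.Perm.mul_apply]

end Aux

section Main

variable {G G' : Type*} [Group G] [Group G'] (ψ : G ≃* G) (ψ' : G' ≃* G')
  (f : G → G') (hbij : Function.Bijective f)

lemma permCongr_ptSym (hhom : ∀ x y : G, f (gaOp ψ x y) = gaOp ψ' (f x) (f y)) (y : G) :
    Equiv.permCongr (Equiv.ofBijective f hbij) (ptSym ψ y) = ptSym ψ' (f y) := by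
  ext x
  have h1 : f ((Equiv.ofBijective f hbij).symm x) = x :=
    (Equiv.ofBijective f hbij).apply_symm_apply x
  have h2 := hhom ((Equiv.ofBijective f hbij).symm x) y
  simp only [Equiv.permCongr_apply, Equiv.ofBijective_apply]
  rw [show ∀ (p : Equiv.Perm G) (z : G), p z = p z from fun _ _ => rfl]
  calc f ((ptSym ψ y) ((Equiv.ofBijective f hbij).symm x))
      = f (gaOp ψ ((Equiv.ofBijective f hbij).symm x) y) := rfl
    _ = gaOp ψ' (f ((Equiv.ofBijective f hbij).symm x)) (f y) := h2
    _ = gaOp ψ' x (f y) := by rw [h1]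
    _ = ptSym ψ' (f y) x := rfl

lemma permCongr_mem (hhom : ∀ x y : G, f (gaOp ψ x y) = gaOp ψ' (f x) (f y)) {g : Equiv.Perm G} (hg : g ∈ innGroup ψ) :
    Equiv.permCongr (Equiv.ofBijective f hbij) g ∈ innGroup ψ' := by
  let c : Equiv.Perm G →* Equiv.Perm G' :=
    { toFun := Equiv.permCongr (Equiv.ofBijective f hbij)
      map_one' := by ext x; simp
      map_mul' := fun g h => by ext x; simp }
  have h1 : ((innGroup ψ).map c) ≤ innGroup ψ' := by
    rw [innGroup, MonoidHom.map_closure]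
    apply (Subgroup.closure_le _).2
    rintro _ ⟨_, ⟨y, rfl⟩, rfl⟩
    refine Subgroup.subset_closure ⟨f y, ?_⟩
    exact (permCongr_ptSym ψ ψ' f hbij hhom y).symm
  exact h1 ⟨g, hg, rfl⟩

lemma permCongr_symm_mem (hhom : ∀ x y : G, f (gaOp ψ x y) = gaOp ψ' (f x) (f y)) {g' : Equiv.Perm G'} (hg : g' ∈ innGroup ψ') :
    Equiv.permCongr (Equiv.ofBijective f hbij).symm g' ∈ innGroup ψ := by
  let c : Equiv.Perm G' →* Equiv.Perm G :=
    { toFun := Equiv.permCongr (Equiv.ofBijective f hbij).symm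
      map_one' := by ext x; simp
      map_mul' := fun g h => by ext x; simp }
  have h1 : ((innGroup ψ').map c) ≤ innGroup ψ := by
    rw [innGroup, MonoidHom.map_closure]
    apply (Subgroup.closure_le _).2
    rintro _ ⟨_, ⟨y', rfl⟩, rfl⟩
    obtain ⟨y, rfl⟩ := hbij.2 y'
    refine Subgroup.subset_closure ⟨y, ?_⟩
    have := permCongr_ptSym ψ ψ' f hbij hhom y
    rw [← this]
    ext x
    show ptSym ψ y x = (Equiv.ofBijective f hbij).symm
        ((Equiv.ofBijective f hbij) ((ptSym ψ y) ((Equiv.ofBijective f hbij).symm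
          ((Equiv.ofBijective f hbij) x))))
    rw [Equiv.symm_apply_apply, Equiv.symm_apply_apply]
  exact h1 ⟨g', hg, rfl⟩

end Main

theorem quandle_iso_maps_cosets {G G' : Type*} [Group G] [Group G']
    (ψ : G ≃* G) (ψ' : G' ≃* G') (f : G → G')
    (hbij : Function.Bijective f)
    (hhom : ∀ x y : G, f (gaOp ψ x y) = gaOp ψ' (f x) (f y))
    (he : f 1 = 1) :
    ∀ x : G, f '' {y | ∃ p ∈ innOrbit ψ, y = x * p}
      = {y | ∃ p ∈ innOrbit ψ', y = f x * p} := by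
  intro x
  set F := Equiv.ofBijective f hbij with hF
  ext z
  simp only [Set.mem_image, Set.mem_setOf_eq]
  constructor
  · rintro ⟨w, hw, rfl⟩
    rw [coset_char] at hw
    obtain ⟨g, hg, rfl⟩ := hw
    rw [coset_char]
    refine ⟨Equiv.permCongr F g, permCongr_mem ψ ψ' f hbij hhom hg, ?_⟩
    have h3 : F.symm (f x) = x := F.symm_apply_apply x
    show F (g (F.symm (f x))) = f (g x)
    rw [h3]; rfl
  · rintro hz
    rw [coset_char] at hz
    obtain ⟨g', hg', hz⟩ := hz
    refine ⟨Equiv.permCongr F.symm g' x, ?_, ?_⟩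
    · rw [coset_char]
      exact ⟨_, permCongr_symm_mem ψ ψ' f hbij hhom hg', rfl⟩
    · have h4 : f (F.symm (g' (f x))) = g' (f x) := F.apply_symm_apply _
      show f (F.symm (g' (F x))) = z
      calc f (F.symm (g' (F x))) = f (F.symm (g' (f x))) := rfl
        _ = g' (f x) := h4
        _ = z := hz
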